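/- arXiv:1210.4324 — 7 statements merged into one kernel-verified Lean document; each statement's English description precedes it below -/
import Mathlib

section
/- Let γ : S¹ → V be a C¹ immersed closed curve in a finite-dimensional inner product space V, with length |Γ| = ∫_{S¹} ‖dγ‖, and let c = (1/|Γ|) ∫_{S¹} γ ‖dγ‖ be its center of mass. Then the area of the cone K(Γ) over Γ with vertex c satisfies |Γ|² ≥ 4π |K(Γ)|. -/
/-!
The cone over `γ` with apex `c` has area `½ ∫ ‖γ - c‖ ‖γ'‖ |sin ∠(γ - c, γ')| ≤ ½ ∫_Γ ‖γ - c‖ ds`.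
In an arclength parametrization `g` on `[0, L]`, `L = |Γ|`, the vector `g - c` has mean zero, so
Wirtinger's inequality (Parseval, coordinatewise) gives `∫ ‖g - c‖² ≤ (L / 2π)² ∫ ‖g'‖² = L³ / 4π²`,
and integrating the AM–GM bound `‖g - c‖ ≤ (π / L) ‖g - c‖² + L / 4π` gives
`∫_Γ ‖γ - c‖ ds ≤ L² / 2π`.
-/

open MeasureTheory Set Filter Function intervalIntegral
open scoped Real Interval

theorem fourierCoeffOn_zero_of_integral_eq_zero {a b : ℝ} (hab : a < b) {f : ℝ → ℂ}
    (hmean : ∫ x in a..b, f x = 0) : fourierCoeffOn hab f 0 = 0 := by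
  simp [fourierCoeffOn_eq_integral, hmean]

theorem norm_fourierCoeffOn_le_of_hasDerivAt {a b : ℝ} (hab : a < b) {f f' : ℝ → ℂ}
    (hf : ∀ x ∈ [[a, b]], HasDerivAt f (f' x) x) (hf' : IntervalIntegrable f' volume a b)
    (hfab : f a = f b) {n : ℤ} (hn : n ≠ 0) :
    ‖fourierCoeffOn hab f n‖ ≤ (b - a) / (2 * π) * ‖fourierCoeffOn hab f' n‖ := by
  have hn1 : (1 : ℝ) ≤ |(n : ℝ)| := by exact_mod_cast Int.one_le_abs hn
  rw [fourierCoeffOn_of_hasDerivAt hab hn hf hf', hfab, sub_self, mul_zero, zero_sub]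
  simp only [← Complex.ofReal_sub, norm_mul, norm_div, norm_neg, norm_one, Complex.norm_real,
    Complex.norm_I, Complex.norm_ofNat, Complex.norm_intCast, Real.norm_eq_abs,
    abs_of_pos Real.pi_pos, abs_of_pos (sub_pos.2 hab)]
  rw [mul_one, ← mul_assoc, one_div_mul_eq_div]
  gcongr ?_ * _
  exact div_le_div_of_nonneg_left (sub_pos.2 hab).le (by positivity)
    (le_mul_of_one_le_right (by positivity) hn1)

theorem ContinuousOn.memLp_two_restrict_Ioc {E : Type*} [NormedAddCommGroup E] {a b : ℝ}
    {f : ℝ → E} (hf : ContinuousOn f (Icc a b)) :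
    MemLp f 2 (volume.restrict (Ioc a b)) := by
  have hf' := hf.mono Ioc_subset_Icc_self
  rw [memLp_two_iff_integrable_sq_norm (hf'.aestronglyMeasurable measurableSet_Ioc)]
  exact ((hf.norm.pow 2).integrableOn_Icc).mono_set Ioc_subset_Icc_self

theorem wirtinger_inequality_complex {a b : ℝ} (hab : a < b) {f f' : ℝ → ℂ}
    (hf : ∀ x ∈ [[a, b]], HasDerivAt f (f' x) x) (hf' : ContinuousOn f' [[a, b]])
    (hfab : f a = f b) (hmean : ∫ x in a..b, f x = 0) :
    ∫ x in a..b, ‖f x‖ ^ 2 ≤ ((b - a) / (2 * π)) ^ 2 * ∫ x in a..b, ‖f' x‖ ^ 2 := by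
  have hfc : ContinuousOn f [[a, b]] := fun x hx => (hf x hx).continuousAt.continuousWithinAt
  have hterm : ∀ n, ‖fourierCoeffOn hab f n‖ ^ 2
      ≤ ((b - a) / (2 * π)) ^ 2 * ‖fourierCoeffOn hab f' n‖ ^ 2 := by
    intro n
    rcases eq_or_ne n 0 with rfl | hn
    · simp [fourierCoeffOn_zero_of_integral_eq_zero hab hmean]
      positivity
    · rw [← mul_pow]
      exact pow_le_pow_left₀ (norm_nonneg _)
        (norm_fourierCoeffOn_le_of_hasDerivAt hab hf hf'.intervalIntegrable hfab hn) 2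
  rw [uIcc_of_le hab.le] at hfc hf'
  have parseval := hasSum_le hterm (hasSum_sq_fourierCoeffOn hab hfc.memLp_two_restrict_Ioc)
    ((hasSum_sq_fourierCoeffOn hab hf'.memLp_two_restrict_Ioc).mul_left _)
  rwa [smul_eq_mul, smul_eq_mul, mul_left_comm, mul_le_mul_iff_right₀ (inv_pos.2 (sub_pos.2 hab))]
    at parseval

theorem wirtinger_inequality {V : Type*} [NormedAddCommGroup V] [InnerProductSpace ℝ V]
    [FiniteDimensional ℝ V] {a b : ℝ} (hab : a < b) {f f' : ℝ → V}
    (hf : ∀ x ∈ [[a, b]], HasDerivAt f (f' x) x) (hf' : ContinuousOn f' [[a, b]])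
    (hfab : f a = f b) (hmean : ∫ x in a..b, f x = 0) :
    ∫ x in a..b, ‖f x‖ ^ 2 ≤ ((b - a) / (2 * π)) ^ 2 * ∫ x in a..b, ‖f' x‖ ^ 2 := by
  have hfc : ContinuousOn f [[a, b]] := fun x hx => (hf x hx).continuousAt.continuousWithinAt
  let e := stdOrthonormalBasis ℝ V
  have hcoord : ∀ i, ∫ x in a..b, ‖inner ℝ (e i) (f x)‖ ^ 2
      ≤ ((b - a) / (2 * π)) ^ 2 * ∫ x in a..b, ‖inner ℝ (e i) (f' x)‖ ^ 2 := by
    intro i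
    have hfi : IntervalIntegrable f volume a b := hfc.intervalIntegrable
    simpa only [Complex.norm_real] using wirtinger_inequality_complex hab
      (f := fun x => (inner ℝ (e i) (f x) : ℂ)) (f' := fun x => (inner ℝ (e i) (f' x) : ℂ))
      (fun x hx => ((innerSL ℝ (e i)).hasFDerivAt.comp_hasDerivAt x (hf x hx)).ofReal_comp)
      (Complex.continuous_ofReal.comp_continuousOn
        ((innerSL ℝ (e i)).continuous.comp_continuousOn hf'))
      (by rw [hfab])
      (by
        have := (innerSL ℝ (e i)).intervalIntegral_comp_comm hfi
        simp only [innerSL_apply_apply] at this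
        rw [integral_ofReal, this, hmean, inner_zero_right, Complex.ofReal_zero])
  have hsplit : ∀ u : ℝ → V, ContinuousOn u [[a, b]] →
      ∫ x in a..b, ‖u x‖ ^ 2 = ∑ i, ∫ x in a..b, ‖inner ℝ (e i) (u x)‖ ^ 2 := by
    intro u hu
    rw [← intervalIntegral.integral_finsetSum]
    · simp only [e.sum_sq_norm_inner_right]
    · exact fun i _ =>
        (((innerSL ℝ (e i)).continuous.comp_continuousOn hu).norm.pow 2).intervalIntegrable
  rw [hsplit f hfc, hsplit f' hf', Finset.mul_sum]
  exact Finset.sum_le_sum fun i _ => hcoord i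

theorem le_mul_sq_add_inv {a : ℝ} (ha : 0 < a) (t : ℝ) : t ≤ a * t ^ 2 + (4 * a)⁻¹ := by
  rw [← sub_nonneg]
  have : a * t ^ 2 + (4 * a)⁻¹ - t = (4 * a)⁻¹ * (2 * a * t - 1) ^ 2 := by
    field_simp
    ring
  rw [this]
  positivity

theorem integral_norm_sub_le_of_norm_deriv_eq_one {V : Type*} [NormedAddCommGroup V]
    [InnerProductSpace ℝ V] [FiniteDimensional ℝ V] {a b : ℝ} (hab : a < b) {g g' : ℝ → V}
    (hg : ∀ x ∈ [[a, b]], HasDerivAt g (g' x) x) (hg' : ContinuousOn g' [[a, b]])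
    (hunit : ∀ x ∈ [[a, b]], ‖g' x‖ = 1) (hgab : g a = g b) {c : V}
    (hc : ∫ x in a..b, g x = (b - a) • c) :
    ∫ x in a..b, ‖g x - c‖ ≤ (b - a) ^ 2 / (2 * π) := by
  have hL : 0 < b - a := sub_pos.2 hab
  have hgc : ContinuousOn g [[a, b]] := fun x hx => (hg x hx).continuousAt.continuousWithinAt
  have hhc : ContinuousOn (fun x => ‖g x - c‖) [[a, b]] := (hgc.sub continuousOn_const).norm
  have hmean : ∫ x in a..b, (g x - c) = 0 := by
    rw [integral_sub hgc.intervalIntegrable intervalIntegrable_const, hc,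
      intervalIntegral.integral_const, sub_self]
  have hspeed : ∫ x in a..b, ‖g' x‖ ^ 2 = b - a := by
    rw [integral_congr (g := fun _ => (1 : ℝ)) fun x hx => by simp [hunit x hx] ]
    simp
  have hwirt := wirtinger_inequality hab (fun x hx => (hg x hx).sub_const c) hg'
    (by rw [hgab]) hmean
  rw [hspeed] at hwirt
  set k := π / (b - a) with hk_def
  have hk : 0 < k := div_pos Real.pi_pos hL
  have hint : IntervalIntegrable (fun x => k * ‖g x - c‖ ^ 2) volume a b :=
    (continuousOn_const.mul (hhc.pow 2)).intervalIntegrable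
  calc ∫ x in a..b, ‖g x - c‖
      ≤ ∫ x in a..b, (k * ‖g x - c‖ ^ 2 + (4 * k)⁻¹) :=
        integral_mono_on hab.le hhc.intervalIntegrable (hint.add intervalIntegrable_const)
          fun x _ => le_mul_sq_add_inv hk _
    _ = k * (∫ x in a..b, ‖g x - c‖ ^ 2) + (b - a) * (4 * k)⁻¹ := by
        rw [integral_add hint intervalIntegrable_const, intervalIntegral.integral_const_mul,
          intervalIntegral.integral_const, smul_eq_mul]
    _ ≤ k * (((b - a) / (2 * π)) ^ 2 * (b - a)) + (b - a) * (4 * k)⁻¹ := by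
        gcongr
    _ = (b - a) ^ 2 / (2 * π) := by
        rw [hk_def]
        field_simp
        ring

theorem Function.Periodic.deriv {E : Type*} [NormedAddCommGroup E] [NormedSpace ℝ E]
    {f : ℝ → E} {T : ℝ} (hf : Periodic f T) : Periodic (deriv f) T := by
  intro x
  rw [← deriv_comp_add_const, hf.funext]

theorem exists_hasDerivAt_inverse {s ρ : ℝ → ℝ} (hs : ∀ x, HasDerivAt s (ρ x) x)
    (hρ : ∀ x, 0 < ρ x) (hsurj : Surjective s) :
    ∃ ψ : ℝ → ℝ, LeftInverse ψ s ∧ ∀ y, HasDerivAt ψ (ρ (ψ y))⁻¹ y := by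
  let e := (strictMono_of_hasDerivAt_pos hs hρ).orderIsoOfSurjective s hsurj
  have hright : RightInverse e.symm s := e.apply_symm_apply
  exact ⟨e.symm, e.symm_apply_apply, fun y =>
    (hs _).of_local_left_inverse e.symm.continuous.continuousAt (hρ _).ne'
      (Eventually.of_forall hright)⟩

section arclength
variable {E : Type*} [NormedAddCommGroup E] [NormedSpace ℝ E] {γ : ℝ → E}

noncomputable def arclength (γ : ℝ → E) (θ : ℝ) : ℝ := ∫ u in 0..θ, ‖deriv γ u‖

@[simp]
theorem arclength_zero : arclength γ 0 = 0 := intervalIntegral.integral_same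

theorem hasDerivAt_arclength (hγ : ContDiff ℝ 1 γ) (θ : ℝ) :
    HasDerivAt (arclength γ) ‖deriv γ θ‖ θ :=
  ((hγ.continuous_deriv le_rfl).norm.integral_hasStrictDerivAt 0 θ).hasDerivAt

theorem strictMono_arclength (hγ : ContDiff ℝ 1 γ) (himm : ∀ θ, deriv γ θ ≠ 0) :
    StrictMono (arclength γ) :=
  strictMono_of_hasDerivAt_pos (hasDerivAt_arclength hγ) fun θ => norm_pos_iff.2 (himm θ)

theorem arclength_add_period (hγ : ContDiff ℝ 1 γ) {T : ℝ} (hper : Periodic γ T) (θ : ℝ) :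
    arclength γ (θ + T) = arclength γ θ + arclength γ T := by
  have hc := (hγ.continuous_deriv le_rfl).norm
  have hρ : Periodic (fun u => ‖deriv γ u‖) T := fun u => by simp only [hper.deriv u]
  rw [arclength, ← intervalIntegral.integral_add_adjacent_intervals (hc.intervalIntegrable 0 θ)
    (hc.intervalIntegrable θ (θ + T)), hρ.intervalIntegral_add_eq θ 0, zero_add]
  rfl

theorem surjective_arclength (hγ : ContDiff ℝ 1 γ) (himm : ∀ θ, deriv γ θ ≠ 0) {T : ℝ}
    (hT : 0 < T) (hper : Periodic γ T) : Surjective (arclength γ) := by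
  set L := arclength γ T
  have hL : 0 < L / T :=
    div_pos (by simpa using strictMono_arclength hγ himm hT) hT
  have hcont : Continuous (arclength γ) :=
    continuous_iff_continuousAt.2 fun θ => (hasDerivAt_arclength hγ θ).continuousAt
  have hφ : Periodic (fun θ => arclength γ θ - L / T * θ) T := fun θ => by
    simp only [arclength_add_period hγ hper]
    field_simp
    ring
  obtain ⟨M, hM⟩ := isBounded_iff_forall_norm_le.1
    (hφ.isBounded_of_continuous hT.ne' (hcont.sub (continuous_const.mul continuous_id)))
  have hbound : ∀ θ, |arclength γ θ - L / T * θ| ≤ M := fun θ => hM _ ⟨θ, rfl⟩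
  refine hcont.surjective ?_ ?_
  · refine tendsto_atTop_mono (fun θ => ?_)
      (tendsto_atTop_add_const_right _ (-M) (tendsto_id.const_mul_atTop hL))
    rw [id]
    linarith [(abs_le.1 (hbound θ)).1]
  · refine tendsto_atBot_mono (fun θ => ?_)
      (tendsto_atBot_add_const_right _ M (tendsto_id.const_mul_atBot hL))
    rw [id]
    linarith [(abs_le.1 (hbound θ)).2]

theorem integral_norm_deriv_smul_comp {F : Type*} [NormedAddCommGroup F] [NormedSpace ℝ F]
    (hγ : ContDiff ℝ 1 γ) {ψ : ℝ → ℝ} (hψ : LeftInverse ψ (arclength γ)) (G : E → F)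
    (a b : ℝ) :
    ∫ θ in a..b, ‖deriv γ θ‖ • G (γ θ) = ∫ u in arclength γ a..arclength γ b, G (γ (ψ u)) := by
  have := integral_deriv_smul_comp_of_deriv_nonneg (a := a) (b := b) (g := fun u => G (γ (ψ u)))
    (fun θ _ => (hasDerivAt_arclength hγ θ).continuousAt.continuousWithinAt)
    (fun θ _ => hasDerivAt_arclength hγ θ) (fun θ _ => norm_nonneg (deriv γ θ))
  simpa only [comp_apply, hψ _] using this

end arclength

theorem integral_norm_deriv_mul_norm_sub_le {V : Type*} [NormedAddCommGroup V]
    [InnerProductSpace ℝ V] [FiniteDimensional ℝ V] {γ : ℝ → V} (hγ : ContDiff ℝ 1 γ)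
    (himm : ∀ θ, deriv γ θ ≠ 0) {T : ℝ} (hT : 0 < T) (hper : Periodic γ T) {c : V}
    (hc : ∫ θ in 0..T, ‖deriv γ θ‖ • γ θ = arclength γ T • c) :
    ∫ θ in 0..T, ‖deriv γ θ‖ * ‖γ θ - c‖ ≤ arclength γ T ^ 2 / (2 * π) := by
  set L := arclength γ T
  have hL : 0 < L := by simpa using strictMono_arclength hγ himm hT
  obtain ⟨ψ, hleft, hψ⟩ := exists_hasDerivAt_inverse (hasDerivAt_arclength hγ)
    (fun θ => norm_pos_iff.2 (himm θ)) (surjective_arclength hγ himm hT hper)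
  have hψc : Continuous ψ := continuous_iff_continuousAt.2 fun u => (hψ u).continuousAt
  have hγ' : Continuous (deriv γ) := hγ.continuous_deriv le_rfl
  have hg : ∀ u, HasDerivAt (fun u => γ (ψ u)) (‖deriv γ (ψ u)‖⁻¹ • deriv γ (ψ u)) u :=
    fun u => ((hγ.differentiable one_ne_zero (ψ u)).hasDerivAt).scomp u (hψ u)
  have hg' : Continuous fun u => ‖deriv γ (ψ u)‖⁻¹ • deriv γ (ψ u) :=
    ((hγ'.comp hψc).norm.inv₀ fun u => norm_ne_zero_iff.2 (himm _)).smul (hγ'.comp hψc)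
  have hclosed : γ (ψ 0) = γ (ψ L) := by
    rw [hleft T, ← arclength_zero (γ := γ), hleft 0, ← zero_add T, hper]
  have hcentroid : ∫ u in 0..L, γ (ψ u) = (L - 0) • c := by
    simpa [← hc] using (integral_norm_deriv_smul_comp hγ hleft id 0 T).symm
  have hcurve := integral_norm_sub_le_of_norm_deriv_eq_one hL (fun u _ => hg u) hg'.continuousOn
    (fun u _ => norm_smul_inv_norm (himm _)) hclosed hcentroid
  have hcov := integral_norm_deriv_smul_comp hγ hleft (fun v => ‖v - c‖) 0 T
  rw [arclength_zero] at hcov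
  rw [sub_zero] at hcurve
  exact hcov.trans_le hcurve

theorem sqrt_norm_sq_mul_norm_sq_sub_inner_sq_le {V : Type*} [NormedAddCommGroup V]
    [InnerProductSpace ℝ V] (x y : V) :
    √(‖x‖ ^ 2 * ‖y‖ ^ 2 - inner ℝ x y ^ 2) ≤ ‖x‖ * ‖y‖ :=
  Real.sqrt_le_iff.2 ⟨by positivity, by nlinarith [sq_nonneg (inner ℝ x y)]⟩

/-- isoperimetric inequality for the cone over a closed `C¹`
immersed curve `γ` in a finite-dimensional inner product space `V`, with vertex
at the center of mass `c`: `|Γ|² ≥ 4π |K(Γ)|`.  The cone is parametrized by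
`ξ(t,θ) = c + t(γ(θ) - c)` and its area is
`∫₀¹∫₀^{2π} ‖∂_t ξ ∧ ∂_θ ξ‖ dθ dt`, where
`‖a ∧ b‖ = √(‖a‖²‖b‖² - ⟪a,b⟫²)`. -/
theorem stmt_3 {V : Type*} [NormedAddCommGroup V] [InnerProductSpace ℝ V]
    [FiniteDimensional ℝ V]
    (γ : ℝ → V) (hper : ∀ θ : ℝ, γ (θ + 2 * Real.pi) = γ θ)
    (hγ : ContDiff ℝ 1 γ) (himm : ∀ θ : ℝ, deriv γ θ ≠ 0)
    (Len : ℝ) (hLen : Len = ∫ θ in (0:ℝ)..(2 * Real.pi), ‖deriv γ θ‖)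
    (c : V) (hc : c = Len⁻¹ • ∫ θ in (0:ℝ)..(2 * Real.pi), ‖deriv γ θ‖ • γ θ)
    (K : ℝ)
    (hK : K = ∫ t in (0:ℝ)..1, ∫ θ in (0:ℝ)..(2 * Real.pi),
      t * Real.sqrt (‖γ θ - c‖ ^ 2 * ‖deriv γ θ‖ ^ 2
        - (inner ℝ (γ θ - c) (deriv γ θ) : ℝ) ^ 2)) :
    4 * Real.pi * K ≤ Len ^ 2 := by
  have hLen' : Len = arclength γ (2 * π) := hLen
  have hL : 0 < Len := by simpa [hLen'] using strictMono_arclength hγ himm Real.two_pi_pos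
  have hK' : K = (∫ θ in 0..2 * π, √(‖γ θ - c‖ ^ 2 * ‖deriv γ θ‖ ^ 2
      - inner ℝ (γ θ - c) (deriv γ θ) ^ 2)) / 2 := by
    simp only [hK, intervalIntegral.integral_const_mul, intervalIntegral.integral_mul_const,
      integral_id]
    ring
  have hcone : (∫ θ in 0..2 * π, √(‖γ θ - c‖ ^ 2 * ‖deriv γ θ‖ ^ 2
      - inner ℝ (γ θ - c) (deriv γ θ) ^ 2)) ≤ ∫ θ in 0..2 * π, ‖deriv γ θ‖ * ‖γ θ - c‖ :=
    integral_mono_on Real.two_pi_pos.le (Continuous.intervalIntegrable (by fun_prop) _ _)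
      (Continuous.intervalIntegrable (by fun_prop) _ _) fun θ _ =>
      (sqrt_norm_sq_mul_norm_sq_sub_inner_sq_le _ _).trans_eq (mul_comm _ _)
  have hcurve := integral_norm_deriv_mul_norm_sub_le hγ himm Real.two_pi_pos hper (c := c)
    (by rw [hc, ← hLen', smul_inv_smul₀ hL.ne'])
  rw [← hLen', le_div_iff₀ Real.two_pi_pos] at hcurve
  calc 4 * π * K = 2 * π * ∫ θ in 0..2 * π, √(‖γ θ - c‖ ^ 2 * ‖deriv γ θ‖ ^ 2
        - inner ℝ (γ θ - c) (deriv γ θ) ^ 2) := by rw [hK']; ring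
    _ ≤ 2 * π * ∫ θ in 0..2 * π, ‖deriv γ θ‖ * ‖γ θ - c‖ := by gcongr
    _ ≤ Len ^ 2 := by linarith
end

section
/- Let f : Ď⁺ → M be a C¹ map into a Riemannian manifold with energy E = ∫_{Ď⁺} ‖df‖² < ∞ (computed with the Euclidean metric on Ď⁺). For every r ∈ (0,1) there exists t₀ ∈ [r², r] such that the length of the image of the half circle Γ_{t₀} = {z ∈ Ď⁺ : |z| = t₀} satisfies L(t₀)² ≤ π E / log(1/r), where L(t) = ∫_{Γ_t} ‖df‖. -/
/-!
Let `G t = ∫₀^π ‖Φ (t e^{iθ})‖² dθ`. Cauchy–Schwarz on `[0, π]` gives `L(t)² ≤ π t² G(t)`,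
and polar coordinates give `∫_{r²}^{r} t G(t) dt ≤ E = ∫_{r²}^{r} E / (t log(1/r)) dt`.
So `t G(t) ≤ E / (t log(1/r))` at some `t ∈ (r², r)`, and there
`L(t)² ≤ π t · t G(t) ≤ π E / log(1/r)`.
-/

open MeasureTheory Set Real

theorem sq_intervalIntegral_le {f : ℝ → ℝ} {a b : ℝ} (hab : a ≤ b)
    (hf : IntervalIntegrable f volume a b)
    (hf2 : IntervalIntegrable (fun x => f x ^ 2) volume a b) :
    (∫ x in a..b, f x) ^ 2 ≤ (b - a) * ∫ x in a..b, f x ^ 2 := by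
  set I := ∫ x in a..b, f x
  set J := ∫ x in a..b, f x ^ 2
  rcases hab.eq_or_lt with rfl | hab
  · simp [I]
  have hexpand : ∫ x in a..b, ((b - a) * f x - I) ^ 2 = (b - a) * ((b - a) * J - I ^ 2) := by
    have hsq : ∀ x, ((b - a) * f x - I) ^ 2
        = (b - a) ^ 2 * f x ^ 2 - 2 * (b - a) * I * f x + I ^ 2 := fun x => by ring
    simp_rw [hsq]
    rw [intervalIntegral.integral_add ((hf2.const_mul _).sub (hf.const_mul _))
        intervalIntegrable_const, intervalIntegral.integral_sub (hf2.const_mul _) (hf.const_mul _),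
      intervalIntegral.integral_const_mul, intervalIntegral.integral_const_mul,
      intervalIntegral.integral_const, smul_eq_mul]
    ring
  have hnonneg : 0 ≤ (b - a) * ((b - a) * J - I ^ 2) :=
    hexpand ▸ intervalIntegral.integral_nonneg hab.le fun x _ => sq_nonneg _
  nlinarith [(mul_nonneg_iff_of_pos_left (sub_pos.2 hab)).1 hnonneg]

theorem exists_mem_Ioo_le_of_intervalIntegral_le {f g : ℝ → ℝ} {a b : ℝ} (hab : a < b)
    (hf : IntervalIntegrable f volume a b) (hg : IntervalIntegrable g volume a b)
    (h : ∫ x in a..b, f x ≤ ∫ x in a..b, g x) : ∃ x ∈ Ioo a b, f x ≤ g x := by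
  by_contra! hlt
  have hpos := intervalIntegral.intervalIntegral_pos_of_pos_on (hf.sub hg)
    (fun x hx => sub_pos.2 (hlt x hx)) hab
  rw [intervalIntegral.integral_sub hf hg] at hpos
  linarith

theorem const_mul_intervalIntegral_eq_setIntegral_Ioo {g : ℝ → ℝ} {a b : ℝ} (hab : a ≤ b)
    (c : ℝ) : c * ∫ x in a..b, g x = ∫ x in Ioo a b, c * g x := by
  rw [intervalIntegral.integral_of_le hab, integral_Ioc_eq_integral_Ioo, integral_const_mul]

theorem integral_inv_sq_to_self {r : ℝ} (hr : 0 < r) : ∫ t in r ^ 2..r, t⁻¹ = log (1 / r) := by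
  rw [integral_inv_of_pos (pow_pos hr 2) hr]
  congr 1
  field_simp

def puncturedUpperHalfDisk : Set ℂ := {z | ‖z‖ < 1 ∧ 0 ≤ z.im ∧ z ≠ 0}

def upperHalfAnnulus (a b : ℝ) : Set ℂ := {z | 0 < z.im ∧ ‖z‖ ∈ Ioo a b}

theorem measurableSet_puncturedUpperHalfDisk : MeasurableSet puncturedUpperHalfDisk :=
  (measurableSet_lt measurable_norm measurable_const).inter
    ((measurableSet_le measurable_const Complex.measurable_im).inter
      (measurableSet_singleton 0).compl)

theorem upperHalfAnnulus_subset_puncturedUpperHalfDisk {a b : ℝ} (hb : b ≤ 1) :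
    upperHalfAnnulus a b ⊆ puncturedUpperHalfDisk := by
  rintro z ⟨him, -, hzb⟩
  exact ⟨hzb.trans_le hb, him.le, fun hz => by simp [hz] at him⟩

theorem circleMap_mem_puncturedUpperHalfDisk {t θ : ℝ} (ht : t ∈ Ioo 0 1) (hθ : θ ∈ Icc 0 π) :
    circleMap 0 t θ ∈ puncturedUpperHalfDisk := by
  refine ⟨?_, ?_, circleMap_ne_center ht.1.ne'⟩
  · rw [norm_circleMap_zero, abs_of_pos ht.1]
    exact ht.2
  · rw [circleMap_zero_im]
    exact mul_nonneg ht.1.le (sin_nonneg_of_nonneg_of_le_pi hθ.1 hθ.2)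

theorem circleMap_mem_upperHalfAnnulus_iff {a b t θ : ℝ} (ht : 0 < t) (hθ : θ ∈ Ioo (-π) π) :
    circleMap 0 t θ ∈ upperHalfAnnulus a b ↔ (t, θ) ∈ Ioo a b ×ˢ Ioo 0 π := by
  have hsin : 0 < sin θ ↔ θ ∈ Ioo 0 π :=
    ⟨fun h => ⟨lt_of_not_ge fun h0 => (sin_nonpos_of_nonpos_of_neg_pi_le h0 hθ.1.le).not_gt h,
      hθ.2⟩, fun h => sin_pos_of_pos_of_lt_pi h.1 h.2⟩
  simp only [upperHalfAnnulus, mem_ofPred_eq, circleMap_zero_im, norm_circleMap_zero,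
    abs_of_pos ht, mul_pos_iff_of_pos_left ht, hsin, mem_prod]
  exact and_comm

theorem polarCoord_symm_eq_circleMap (p : ℝ × ℝ) :
    Complex.polarCoord.symm p = circleMap 0 p.1 p.2 := by
  rw [Complex.polarCoord_symm_apply, circleMap_zero, Complex.exp_mul_I]
  push_cast
  ring

theorem setIntegral_upperHalfAnnulus {E : Type*} [NormedAddCommGroup E] [NormedSpace ℝ E]
    (f : ℂ → E) {a b : ℝ} (ha : 0 ≤ a) :
    ∫ z in upperHalfAnnulus a b, f z =
      ∫ p in Ioo a b ×ˢ Ioo 0 π, p.1 • f (circleMap 0 p.1 p.2) := by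
  set A := upperHalfAnnulus a b
  set B := Ioo a b ×ˢ Ioo 0 π
  have hA : MeasurableSet A :=
    (measurableSet_lt measurable_const Complex.measurable_im).inter
      (measurableSet_Ioo.preimage measurable_norm)
  have hB : MeasurableSet B := measurableSet_Ioo.prod measurableSet_Ioo
  have hBtarget : B ⊆ Complex.polarCoord.target := fun p hp =>
    ⟨ha.trans_lt hp.1.1, (neg_neg_of_pos pi_pos).trans hp.2.1, hp.2.2⟩
  calc ∫ z in A, f z = ∫ z, A.indicator f z := (integral_indicator hA).symm
    _ = ∫ p in Complex.polarCoord.target, p.1 • A.indicator f (Complex.polarCoord.symm p) :=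
      (Complex.integral_comp_polarCoord_symm _).symm
    _ = ∫ p in Complex.polarCoord.target,
          B.indicator (fun p => p.1 • f (circleMap 0 p.1 p.2)) p := by
      refine setIntegral_congr_fun Complex.polarCoord.open_target.measurableSet fun p hp => ?_
      rw [polarCoord_symm_eq_circleMap]
      by_cases hpB : p ∈ B
      · rw [indicator_of_mem hpB,
          indicator_of_mem ((circleMap_mem_upperHalfAnnulus_iff hp.1 hp.2).2 hpB)]
      · rw [indicator_of_notMem hpB,
          indicator_of_notMem (mt (circleMap_mem_upperHalfAnnulus_iff hp.1 hp.2).1 hpB), smul_zero]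
    _ = ∫ p in B, p.1 • f (circleMap 0 p.1 p.2) := by
      rw [setIntegral_indicator hB, inter_eq_right.2 hBtarget]

theorem ContinuousOn.comp_circleMap {X : Type*} [TopologicalSpace X] {ρ : ℂ → X}
    (hρ : ContinuousOn ρ puncturedUpperHalfDisk) {a b : ℝ} (ha : 0 < a) (hb : b < 1) :
    ContinuousOn (fun p : ℝ × ℝ => ρ (circleMap 0 p.1 p.2)) (Icc a b ×ˢ Icc 0 π) := by
  have hcircle : Continuous fun p : ℝ × ℝ => circleMap 0 p.1 p.2 := by
    unfold circleMap
    fun_prop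
  refine hρ.comp hcircle.continuousOn fun p hp => circleMap_mem_puncturedUpperHalfDisk ?_ hp.2
  exact ⟨ha.trans_le hp.1.1, hp.1.2.trans_lt hb⟩

section Polar

variable {ρ : ℂ → ℝ} {a b : ℝ}

theorem integrable_mul_comp_circleMap_of_continuousOn (hρ : ContinuousOn ρ puncturedUpperHalfDisk)
    (ha : 0 < a) (hb : b < 1) :
    Integrable (fun p : ℝ × ℝ => p.1 * ρ (circleMap 0 p.1 p.2))
      ((volume.restrict (Ioo a b)).prod (volume.restrict (Ioo 0 π))) := by
  rw [Measure.prod_restrict, ← Measure.volume_eq_prod]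
  exact ((continuousOn_fst.mul (hρ.comp_circleMap ha hb)).integrableOn_compact
    (isCompact_Icc.prod isCompact_Icc)).mono_set (prod_mono Ioo_subset_Icc_self Ioo_subset_Icc_self)

theorem intervalIntegrable_mul_integral_circleMap (hρ : ContinuousOn ρ puncturedUpperHalfDisk)
    (ha : 0 < a) (hab : a ≤ b) (hb : b < 1) :
    IntervalIntegrable (fun t => t * ∫ θ in 0..π, ρ (circleMap 0 t θ)) volume a b := by
  rw [intervalIntegrable_iff_integrableOn_Ioo_of_le hab]
  simp_rw [const_mul_intervalIntegral_eq_setIntegral_Ioo pi_pos.le]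
  exact (integrable_mul_comp_circleMap_of_continuousOn hρ ha hb).integral_prod_left

theorem integral_mul_integral_circleMap_le
    (hρ0 : ∀ z ∈ puncturedUpperHalfDisk, 0 ≤ ρ z) (hρ : ContinuousOn ρ puncturedUpperHalfDisk)
    (hint : IntegrableOn ρ puncturedUpperHalfDisk) (ha : 0 < a) (hab : a ≤ b) (hb : b < 1) :
    ∫ t in a..b, t * ∫ θ in 0..π, ρ (circleMap 0 t θ) ≤ ∫ z in puncturedUpperHalfDisk, ρ z := by
  calc ∫ t in a..b, t * ∫ θ in 0..π, ρ (circleMap 0 t θ)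
      = ∫ t in Ioo a b, ∫ θ in Ioo 0 π, t * ρ (circleMap 0 t θ) := by
        simp_rw [const_mul_intervalIntegral_eq_setIntegral_Ioo pi_pos.le]
        rw [intervalIntegral.integral_of_le hab, integral_Ioc_eq_integral_Ioo]
    _ = ∫ p in Ioo a b ×ˢ Ioo 0 π, p.1 * ρ (circleMap 0 p.1 p.2) := by
        rw [Measure.volume_eq_prod, ← Measure.prod_restrict]
        exact (integral_prod _ (integrable_mul_comp_circleMap_of_continuousOn hρ ha hb)).symm
    _ = ∫ z in upperHalfAnnulus a b, ρ z := (setIntegral_upperHalfAnnulus ρ ha.le).symm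
    _ ≤ ∫ z in puncturedUpperHalfDisk, ρ z :=
        setIntegral_mono_set hint
          (ae_restrict_of_forall_mem measurableSet_puncturedUpperHalfDisk hρ0)
          (upperHalfAnnulus_subset_puncturedUpperHalfDisk hb.le).eventuallyLE

end Polar

theorem stmt_4_general {E : Type*} [NormedAddCommGroup E] [NormedSpace ℝ E]
    (Φ : ℂ → (ℂ →L[ℝ] E))
    (hΦcont : ContinuousOn Φ {z : ℂ | ‖z‖ < 1 ∧ 0 ≤ z.im ∧ z ≠ 0})
    (Energy : ℝ)
    (hE : Energy = ∫ z in {z : ℂ | ‖z‖ < 1 ∧ 0 ≤ z.im ∧ z ≠ 0}, ‖Φ z‖ ^ 2)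
    (hint : IntegrableOn (fun z => ‖Φ z‖ ^ 2)
      {z : ℂ | ‖z‖ < 1 ∧ 0 ≤ z.im ∧ z ≠ 0})
    (L : ℝ → ℝ)
    (hL : ∀ t : ℝ, L t = ∫ θ in (0:ℝ)..Real.pi,
      ‖Φ ((t : ℂ) * Complex.exp ((θ : ℂ) * Complex.I))‖ * t) :
    ∀ r ∈ Set.Ioo (0:ℝ) 1, ∃ t₀ ∈ Set.Icc (r ^ 2) r,
      (L t₀) ^ 2 ≤ Real.pi * Energy / Real.log (1 / r) := by
  rintro r ⟨hr0, hr1⟩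
  have hr2 : r ^ 2 < r := by nlinarith
  have hlog : 0 < log (1 / r) := log_pos (one_lt_one_div hr0 hr1)
  have hρ : ContinuousOn (fun z => ‖Φ z‖ ^ 2) puncturedUpperHalfDisk := hΦcont.norm.pow 2
  have hinv : IntervalIntegrable (fun t => Energy / log (1 / r) * t⁻¹) volume (r ^ 2) r :=
    (intervalIntegral.intervalIntegrable_inv (fun t ht => ((pow_pos hr0 2).trans_le
      (uIcc_of_le hr2.le ▸ ht).1).ne') continuousOn_id).const_mul (Energy / log (1 / r))
  obtain ⟨t, ht, hle⟩ := exists_mem_Ioo_le_of_intervalIntegral_le hr2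
    (intervalIntegrable_mul_integral_circleMap hρ (by positivity) hr2.le hr1) hinv <| by
      rw [intervalIntegral.integral_const_mul, integral_inv_sq_to_self hr0,
        div_mul_cancel₀ _ hlog.ne', hE]
      exact integral_mul_integral_circleMap_le (fun z _ => sq_nonneg _) hρ hint
        (by positivity) hr2.le hr1
  have ht0 : 0 < t := (pow_pos hr0 2).trans ht.1
  have hΦt : ContinuousOn (fun θ => Φ (circleMap 0 t θ)) (Icc 0 π) :=
    (hΦcont.comp_circleMap ht0 (ht.2.trans hr1)).comp (Continuous.prodMk_right t).continuousOn
      fun θ hθ => ⟨left_mem_Icc.2 le_rfl, hθ⟩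
  refine ⟨t, Ioo_subset_Icc_self ht, ?_⟩
  calc L t ^ 2 = (∫ θ in 0..π, ‖Φ (circleMap 0 t θ)‖) ^ 2 * t ^ 2 := by
        simp only [hL, circleMap_zero, intervalIntegral.integral_mul_const, mul_pow]
    _ ≤ (π - 0) * (∫ θ in 0..π, ‖Φ (circleMap 0 t θ)‖ ^ 2) * t ^ 2 := by
        gcongr
        exact sq_intervalIntegral_le pi_pos.le (hΦt.norm.intervalIntegrable_of_Icc pi_pos.le)
          ((hΦt.norm.pow 2).intervalIntegrable_of_Icc pi_pos.le)
    _ = π * t * (t * ∫ θ in 0..π, ‖Φ (circleMap 0 t θ)‖ ^ 2) := by ring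
    _ ≤ π * t * (Energy / log (1 / r) * t⁻¹) := by gcongr
    _ = π * Energy / log (1 / r) := by field_simp

/-- Courant–Lebesgue lemma: for a `C¹` map `f` on the punctured
upper half unit disk `Ď⁺` (with derivative `Φ`, continuous on `Ď⁺`) with finite
energy `E = ∫_{Ď⁺} ‖df‖²`, for every `r ∈ (0,1)` there exists `t₀ ∈ [r², r]`
such that the length `L(t₀) = ∫_{Γ_{t₀}} ‖df‖` of the image of the half circle
`Γ_{t₀}` satisfies `L(t₀)² ≤ π E / log(1/r)`. -/
theorem stmt_4 {E : Type*} [NormedAddCommGroup E] [NormedSpace ℝ E]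
    (f : ℂ → E) (Φ : ℂ → (ℂ →L[ℝ] E))
    (hΦcont : ContinuousOn Φ {z : ℂ | ‖z‖ < 1 ∧ 0 ≤ z.im ∧ z ≠ 0})
    (hdiff : ∀ z ∈ {z : ℂ | ‖z‖ < 1 ∧ 0 ≤ z.im ∧ z ≠ 0},
      HasFDerivWithinAt f (Φ z) {z : ℂ | ‖z‖ < 1 ∧ 0 ≤ z.im ∧ z ≠ 0} z)
    (Energy : ℝ)
    (hE : Energy = ∫ z in {z : ℂ | ‖z‖ < 1 ∧ 0 ≤ z.im ∧ z ≠ 0}, ‖Φ z‖ ^ 2)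
    (hint : IntegrableOn (fun z => ‖Φ z‖ ^ 2)
      {z : ℂ | ‖z‖ < 1 ∧ 0 ≤ z.im ∧ z ≠ 0})
    (L : ℝ → ℝ)
    (hL : ∀ t : ℝ, L t = ∫ θ in (0:ℝ)..Real.pi,
      ‖Φ ((t : ℂ) * Complex.exp ((θ : ℂ) * Complex.I))‖ * t) :
    ∀ r ∈ Set.Ioo (0:ℝ) 1, ∃ t₀ ∈ Set.Icc (r ^ 2) r,
      (L t₀) ^ 2 ≤ Real.pi * Energy / Real.log (1 / r) :=
  stmt_4_general Φ hΦcont Energy hE hint L hL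
end

section
/- Let A : (0, r₀] → (0, ∞) be a C¹ increasing positive function and C₄ > 0 a constant with C₄ A(r₀) ≤ 1/2, satisfying A'(t) ≥ 2 t^{-1} (A(t) - C₄ A(t)²) for all t ∈ (0, r₀]. Then for all r ∈ (0, r₀], A(r) ≤ (A(r₀) / (1 - C₄ A(r₀))) · (r/r₀)². -/
/-! Put `g = A / (1 - C₄ A)`. Since `A ≤ A r₀`, the denominator is at least `1/2`, and
`g' = A' / (1 - C₄ A)²`, so the differential inequality for `A` is exactly `t g' ≥ 2 g`.
Hence `g(t) / t²` is increasing, which gives `A r ≤ g r ≤ g r₀ (r / r₀)²`. -/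

open Set

theorem monotoneOn_div_sq_of_two_mul_le_mul_deriv {f f' : ℝ → ℝ} {s : Set ℝ}
    (hs : Convex ℝ s) (hs_pos : ∀ t ∈ s, 0 < t) (hf : ∀ t ∈ s, HasDerivAt f (f' t) t)
    (h : ∀ t ∈ s, 2 * f t ≤ t * f' t) : MonotoneOn (fun t => f t / t ^ 2) s := by
  have hderiv : ∀ t ∈ s,
      HasDerivAt (fun t => f t / t ^ 2) ((t * f' t - 2 * f t) / t ^ 3) t := by
    intro t ht
    have ht0 : t ≠ 0 := (hs_pos t ht).ne'
    refine ((hf t ht).fun_div (hasDerivAt_pow 2 t) (pow_ne_zero 2 ht0)).congr_deriv ?_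
    field_simp
    ring
  refine monotoneOn_of_deriv_nonneg hs
    (fun t ht => (hderiv t ht).continuousAt.continuousWithinAt)
    (fun t ht => (hderiv t (interior_subset ht)).differentiableAt.differentiableWithinAt)
    (fun t ht => ?_)
  have ht := interior_subset ht
  rw [(hderiv t ht).deriv]
  exact div_nonneg (sub_nonneg.2 (h t ht)) (pow_pos (hs_pos t ht) 3).le

theorem le_mul_div_sq_of_two_mul_le_mul_deriv {f f' : ℝ → ℝ} {r r₀ : ℝ} (hr : 0 < r)
    (hrr₀ : r ≤ r₀) (hf : ∀ t ∈ Ioc 0 r₀, HasDerivAt f (f' t) t)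
    (h : ∀ t ∈ Ioc 0 r₀, 2 * f t ≤ t * f' t) : f r ≤ f r₀ * (r / r₀) ^ 2 := by
  have hr₀ : 0 < r₀ := hr.trans_le hrr₀
  have hmono := monotoneOn_div_sq_of_two_mul_le_mul_deriv (convex_Ioc 0 r₀)
    (fun t ht => ht.1) hf h ⟨hr, hrr₀⟩ ⟨hr₀, le_rfl⟩ hrr₀
  calc f r = f r / r ^ 2 * r ^ 2 := by field_simp
    _ ≤ f r₀ / r₀ ^ 2 * r ^ 2 := by gcongr
    _ = f r₀ * (r / r₀) ^ 2 := by ring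

theorem hasDerivAt_div_one_sub_mul {A : ℝ → ℝ} {a c t : ℝ} (hA : HasDerivAt A a t)
    (hden : 1 - c * A t ≠ 0) :
    HasDerivAt (fun u => A u / (1 - c * A u)) (a / (1 - c * A t) ^ 2) t := by
  refine (hA.fun_div ((hA.const_mul c).const_sub 1) hden).congr_deriv ?_
  ring

theorem stmt_6_general (A A' : ℝ → ℝ) (r₀ C₄ : ℝ) (hC₄ : 0 < C₄)
    (hmono : MonotoneOn A (Set.Ioc (0:ℝ) r₀))
    (hsmall : C₄ * A r₀ ≤ 1/2)
    (hderiv : ∀ t ∈ Set.Ioc (0:ℝ) r₀, HasDerivAt A (A' t) t)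
    (hineq : ∀ t ∈ Set.Ioc (0:ℝ) r₀, 2 * t⁻¹ * (A t - C₄ * (A t) ^ 2) ≤ A' t) :
    ∀ r ∈ Set.Ioc (0:ℝ) r₀,
      A r ≤ (A r₀ / (1 - C₄ * A r₀)) * (r / r₀) ^ 2 := by
  intro r hr
  have hden : ∀ t ∈ Ioc 0 r₀, 0 < 1 - C₄ * A t := fun t ht => by
    have := hmono ht ⟨ht.1.trans_le ht.2, le_rfl⟩ ht.2
    nlinarith
  have hg : ∀ t ∈ Ioc 0 r₀, 2 * (A t / (1 - C₄ * A t)) ≤ t * (A' t / (1 - C₄ * A t) ^ 2) :=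
    fun t ht => by
      have h := hineq t ht
      rw [mul_right_comm, ← div_eq_mul_inv, div_le_iff₀' ht.1] at h
      calc 2 * (A t / (1 - C₄ * A t)) = 2 * (A t - C₄ * A t ^ 2) / (1 - C₄ * A t) ^ 2 := by
            field_simp
        _ ≤ t * A' t / (1 - C₄ * A t) ^ 2 := by gcongr
        _ = t * (A' t / (1 - C₄ * A t) ^ 2) := mul_div_assoc _ _ _
  calc A r ≤ A r / (1 - C₄ * A r) := by
        rw [le_div_iff₀ (hden r hr)]
        nlinarith [sq_nonneg (A r)]
    _ ≤ (A r₀ / (1 - C₄ * A r₀)) * (r / r₀) ^ 2 :=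
        le_mul_div_sq_of_two_mul_le_mul_deriv hr.1 hr.2
          (fun t ht => hasDerivAt_div_one_sub_mul (hderiv t ht) (hden t ht).ne') hg

/-- If `A` is `C¹`, increasing and positive on `(0, r₀]`,
`C₄ A(r₀) ≤ 1/2`, and `A'(t) ≥ 2 t⁻¹ (A(t) - C₄ A(t)²)`, then
`A(r) ≤ (A(r₀)/(1 - C₄ A(r₀))) (r/r₀)²` for all `r ∈ (0, r₀]`. -/
theorem stmt_6 (A A' : ℝ → ℝ) (r₀ C₄ : ℝ) (hr₀ : 0 < r₀) (hC₄ : 0 < C₄)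
    (hpos : ∀ t ∈ Set.Ioc (0:ℝ) r₀, 0 < A t)
    (hmono : MonotoneOn A (Set.Ioc (0:ℝ) r₀))
    (hsmall : C₄ * A r₀ ≤ 1/2)
    (hA' : ContinuousOn A' (Set.Ioc (0:ℝ) r₀))
    (hderiv : ∀ t ∈ Set.Ioc (0:ℝ) r₀, HasDerivAt A (A' t) t)
    (hineq : ∀ t ∈ Set.Ioc (0:ℝ) r₀, 2 * t⁻¹ * (A t - C₄ * (A t) ^ 2) ≤ A' t) :
    ∀ r ∈ Set.Ioc (0:ℝ) r₀,
      A r ≤ (A r₀ / (1 - C₄ * A r₀)) * (r / r₀) ^ 2 :=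
  stmt_6_general A A' r₀ C₄ hC₄ hmono hsmall hderiv hineq
end

section
/- Let λ : [0,a] → [0,∞) be measurable and suppose there exist constants C > 0 and ν > 0 such that for all 0 < r₁ ≤ r₂ ≤ a, ∫₀^{r₁} λ(t)² t dt ≤ C (r₁/r₂)^ν ∫₀^{r₂} λ(t)² t dt. Then for all r ∈ [0,a], ∫₀^r λ(t) dt ≤ C^{1/2} (1 - 2^{-ν/2})^{-1} (log 2)^{1/2} (∫₀^r λ(t)² t dt)^{1/2}. -/
/-!
Cut `(0, r]` into the dyadic pieces `(r / 2 ^ (k + 1), r / 2 ^ k]`. On the `k`-th piece,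
Cauchy–Schwarz against the weight `t` gives
`∫ λ ≤ (∫ λ² t)^{1/2} (∫ t⁻¹)^{1/2} = (∫ λ² t)^{1/2} (log 2)^{1/2}`, and the decay hypothesis with
`r₁ = r / 2 ^ k`, `r₂ = r` bounds the first factor by `C^{1/2} ρ^k (∫₀^r λ² t)^{1/2}` with
`ρ = 2^{-ν/2} < 1`. Summing the geometric series over `k` gives the factor `(1 - ρ)⁻¹`.
-/

open MeasureTheory Set

section

variable {α : Type*} [MeasurableSpace α] {μ : Measure α} {f w : α → ℝ}

lemma memLp_two_mul_sqrt (hf : AEMeasurable f μ) (hw : AEMeasurable w μ) (hw0 : 0 ≤ᵐ[μ] w)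
    (hfw : Integrable (fun x => f x ^ 2 * w x) μ) :
    MemLp (fun x => f x * √(w x)) 2 μ := by
  refine (memLp_two_iff_integrable_sq (by fun_prop)).2 (hfw.congr ?_)
  filter_upwards [hw0] with x hx
  rw [mul_pow, Real.sq_sqrt hx]

lemma memLp_two_inv_sqrt (hw : AEMeasurable w μ) (hw0 : ∀ᵐ x ∂μ, 0 < w x)
    (hwi : Integrable (fun x => (w x)⁻¹) μ) : MemLp (fun x => (√(w x))⁻¹) 2 μ := by
  refine (memLp_two_iff_integrable_sq (by fun_prop)).2 (hwi.congr ?_)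
  filter_upwards [hw0] with x hx
  rw [inv_pow, Real.sq_sqrt hx.le]

lemma ae_eq_mul_sqrt_mul_inv_sqrt (hw0 : ∀ᵐ x ∂μ, 0 < w x) :
    f =ᵐ[μ] fun x => f x * √(w x) * (√(w x))⁻¹ := by
  filter_upwards [hw0] with x hx
  rw [mul_assoc, mul_inv_cancel₀ (Real.sqrt_pos.2 hx).ne', mul_one]

lemma Integrable.of_integrable_sq_mul_of_integrable_inv (hf : AEMeasurable f μ)
    (hw : AEMeasurable w μ) (hw0 : ∀ᵐ x ∂μ, 0 < w x)
    (hfw : Integrable (fun x => f x ^ 2 * w x) μ) (hwi : Integrable (fun x => (w x)⁻¹) μ) :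
    Integrable f μ :=
  ((memLp_two_mul_sqrt hf hw (hw0.mono fun _ hx => hx.le) hfw).integrable_mul
    (memLp_two_inv_sqrt hw hw0 hwi)).congr (ae_eq_mul_sqrt_mul_inv_sqrt hw0).symm

lemma integral_le_sqrt_integral_sq_mul_mul_sqrt_integral_inv (hf : AEMeasurable f μ)
    (hw : AEMeasurable w μ) (hf0 : 0 ≤ᵐ[μ] f) (hw0 : ∀ᵐ x ∂μ, 0 < w x)
    (hfw : Integrable (fun x => f x ^ 2 * w x) μ) (hwi : Integrable (fun x => (w x)⁻¹) μ) :
    ∫ x, f x ∂μ ≤ √(∫ x, f x ^ 2 * w x ∂μ) * √(∫ x, (w x)⁻¹ ∂μ) := by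
  have hCS := integral_mul_le_Lp_mul_Lq_of_nonneg Real.HolderConjugate.two_two
    (hf0.mono fun x hx => mul_nonneg hx (Real.sqrt_nonneg (w x)))
    (ae_of_all _ fun x => inv_nonneg.2 (Real.sqrt_nonneg (w x)))
    (by simpa using memLp_two_mul_sqrt hf hw (hw0.mono fun _ hx => hx.le) hfw)
    (by simpa using memLp_two_inv_sqrt hw hw0 hwi)
  have hF : ∫ x, (f x * √(w x)) ^ 2 ∂μ = ∫ x, f x ^ 2 * w x ∂μ := integral_congr_ae <| by
    filter_upwards [hw0] with x hx
    rw [mul_pow, Real.sq_sqrt hx.le]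
  have hG : ∫ x, (√(w x))⁻¹ ^ 2 ∂μ = ∫ x, (w x)⁻¹ ∂μ := integral_congr_ae <| by
    filter_upwards [hw0] with x hx
    rw [inv_pow, Real.sq_sqrt hx.le]
  simp only [Real.rpow_two] at hCS
  rwa [integral_congr_ae (ae_eq_mul_sqrt_mul_inv_sqrt hw0), Real.sqrt_eq_rpow, Real.sqrt_eq_rpow,
    ← hF, ← hG]

lemma setIntegral_iUnion_le_tsum {ι : Type*} [Countable ι] {s : ι → Set α} {b : ι → ℝ}
    (hs : ∀ i, MeasurableSet (s i)) (hd : Pairwise (Function.onFun Disjoint s))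
    (hf0 : 0 ≤ᵐ[μ] f) (hfi : ∀ i, IntegrableOn f (s i) μ) (hb : Summable b)
    (hfb : ∀ i, ∫ x in s i, f x ∂μ ≤ b i) :
    ∫ x in ⋃ i, s i, f x ∂μ ≤ ∑' i, b i := by
  have hnorm : ∀ i, ∫ x in s i, ‖f x‖ ∂μ = ∫ x in s i, f x ∂μ := fun i =>
    integral_congr_ae <| ae_restrict_of_ae <| hf0.mono fun x hx => Real.norm_of_nonneg hx
  have hsum : Summable fun i => ∫ x in s i, f x ∂μ :=
    hb.of_nonneg_of_le (fun i => integral_nonneg_of_ae (ae_restrict_of_ae hf0)) hfb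
  rw [integral_iUnion hs hd (integrableOn_iUnion_of_summable_integral_norm hfi
    (by simpa only [hnorm] using hsum))]
  exact hsum.tsum_le_tsum hfb hb

end

lemma integrableOn_Ioc_inv {c d : ℝ} (hc : 0 < c) :
    IntegrableOn (fun t : ℝ => t⁻¹) (Ioc c d) :=
  (continuousOn_inv₀.mono fun _ ht => (hc.trans_le ht.1).ne').integrableOn_Icc.mono_set
    Ioc_subset_Icc_self

lemma setIntegral_Ioc_inv {c d : ℝ} (hc : 0 < c) (hcd : c ≤ d) :
    ∫ t in Ioc c d, t⁻¹ = Real.log (d / c) := by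
  rw [← intervalIntegral.integral_of_le hcd, integral_inv_of_pos hc (hc.trans_le hcd)]

lemma iUnion_Ioc_div_two_pow {r : ℝ} (hr : 0 < r) :
    ⋃ k : ℕ, Ioc (r / 2 ^ (k + 1)) (r / 2 ^ k) = Ioc 0 r := by
  ext t
  simp only [mem_iUnion, mem_Ioc]
  constructor
  · rintro ⟨k, hk₁, hk₂⟩
    exact ⟨(by positivity : (0 : ℝ) < r / 2 ^ (k + 1)).trans hk₁,
      hk₂.trans (div_le_self hr.le (one_le_pow₀ one_le_two))⟩
  · rintro ⟨ht, htr⟩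
    obtain ⟨k, hk₁, hk₂⟩ := exists_nat_pow_near ((one_le_div ht).2 htr) one_lt_two
    refine ⟨k, (div_lt_iff₀ (by positivity)).2 ?_, (le_div_iff₀ (by positivity)).2 ?_⟩
    · rwa [div_lt_iff₀ ht, mul_comm] at hk₂
    · rwa [le_div_iff₀ ht, mul_comm] at hk₁

lemma pairwise_disjoint_Ioc_div_two_pow {r : ℝ} (hr : 0 ≤ r) :
    Pairwise (Function.onFun Disjoint fun k : ℕ => Ioc (r / 2 ^ (k + 1)) (r / 2 ^ k)) :=
  Antitone.pairwise_disjoint_on_Ioc_succ (f := fun k : ℕ => r / 2 ^ k) fun _ _ h =>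
    div_le_div_of_nonneg_left hr (by positivity) (pow_le_pow_right₀ one_le_two h)

lemma div_two_pow_div_self_rpow {r : ℝ} (hr : r ≠ 0) (ν : ℝ) (k : ℕ) :
    (r / 2 ^ k / r) ^ ν = (((2 : ℝ) ^ (-(ν / 2))) ^ k) ^ 2 := by
  rw [div_div_cancel_left' hr, ← pow_mul, ← Real.rpow_mul_natCast zero_le_two,
    Real.inv_rpow (by positivity), ← Real.rpow_natCast_mul zero_le_two,
    ← Real.rpow_neg zero_le_two]
  push_cast
  ring_nf

section DyadicPieces

variable {l : ℝ → ℝ} {r : ℝ}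

lemma integrableOn_Ioc_of_integrableOn_sq_mul {c d : ℝ} (hc : 0 < c)
    (hl : AEMeasurable l (volume.restrict (Ioc c d)))
    (hint : IntegrableOn (fun t => l t ^ 2 * t) (Ioc c d)) : IntegrableOn l (Ioc c d) :=
  Integrable.of_integrable_sq_mul_of_integrable_inv hl aemeasurable_id
    (ae_restrict_of_forall_mem measurableSet_Ioc fun _ ht => hc.trans ht.1) hint
    (integrableOn_Ioc_inv hc)

lemma setIntegral_Ioc_le_sqrt_mul_sqrt_log {c d : ℝ} (hc : 0 < c) (hcd : c ≤ d)
    (hl : AEMeasurable l (volume.restrict (Ioc c d))) (hl0 : 0 ≤ᵐ[volume.restrict (Ioc c d)] l)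
    (hint : IntegrableOn (fun t => l t ^ 2 * t) (Ioc c d)) :
    ∫ t in Ioc c d, l t ≤ √(∫ t in Ioc c d, l t ^ 2 * t) * √(Real.log (d / c)) := by
  rw [← setIntegral_Ioc_inv hc hcd]
  exact integral_le_sqrt_integral_sq_mul_mul_sqrt_integral_inv hl aemeasurable_id hl0
    (ae_restrict_of_forall_mem measurableSet_Ioc fun _ ht => hc.trans ht.1) hint
    (integrableOn_Ioc_inv hc)

lemma integrableOn_Ioc_div_two_pow (hr : 0 < r) (k : ℕ) (hl : Measurable l)
    (hint : IntegrableOn (fun t => l t ^ 2 * t) (Ioc 0 r)) :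
    IntegrableOn l (Ioc (r / 2 ^ (k + 1)) (r / 2 ^ k)) :=
  integrableOn_Ioc_of_integrableOn_sq_mul (by positivity) hl.aemeasurable
    (hint.mono_set (Ioc_subset_Ioc (by positivity)
      (div_le_self hr.le (one_le_pow₀ one_le_two))))

lemma setIntegral_Ioc_div_two_pow_le (hr : 0 < r) (k : ℕ) (hl : Measurable l)
    (hl0 : ∀ t, 0 ≤ l t) (hint : IntegrableOn (fun t => l t ^ 2 * t) (Ioc 0 (r / 2 ^ k))) :
    ∫ t in Ioc (r / 2 ^ (k + 1)) (r / 2 ^ k), l t ≤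
      √(∫ t in Ioc 0 (r / 2 ^ k), l t ^ 2 * t) * √(Real.log 2) := by
  have hsub : Ioc (r / 2 ^ (k + 1)) (r / 2 ^ k) ⊆ Ioc 0 (r / 2 ^ k) :=
    Ioc_subset_Ioc_left (by positivity)
  have hratio : r / 2 ^ k / (r / 2 ^ (k + 1)) = 2 := by
    field_simp
    ring
  calc ∫ t in Ioc (r / 2 ^ (k + 1)) (r / 2 ^ k), l t
      ≤ √(∫ t in Ioc (r / 2 ^ (k + 1)) (r / 2 ^ k), l t ^ 2 * t) * √(Real.log 2) := by
        simpa only [hratio] using setIntegral_Ioc_le_sqrt_mul_sqrt_log (by positivity)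
          (div_le_div_of_nonneg_left hr.le (by positivity)
            (pow_le_pow_right₀ one_le_two k.le_succ))
          hl.aemeasurable (ae_of_all _ hl0) (hint.mono_set hsub)
    _ ≤ √(∫ t in Ioc 0 (r / 2 ^ k), l t ^ 2 * t) * √(Real.log 2) := by
        refine mul_le_mul_of_nonneg_right (Real.sqrt_le_sqrt ?_) (Real.sqrt_nonneg _)
        exact setIntegral_mono_set hint
          (ae_restrict_of_forall_mem measurableSet_Ioc fun t ht => by
            have := ht.1.le
            positivity)
          hsub.eventuallyLE

lemma setIntegral_Ioc_div_two_pow_le_of_decay (hr : 0 < r) (k : ℕ) (hl : Measurable l)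
    (hl0 : ∀ t, 0 ≤ l t) (hint : IntegrableOn (fun t => l t ^ 2 * t) (Ioc 0 r))
    {C ν : ℝ} (hC : 0 ≤ C)
    (hdecay : ∫ t in Ioc 0 (r / 2 ^ k), l t ^ 2 * t ≤
      C * (r / 2 ^ k / r) ^ ν * ∫ t in Ioc 0 r, l t ^ 2 * t) :
    ∫ t in Ioc (r / 2 ^ (k + 1)) (r / 2 ^ k), l t ≤
      √C * √(Real.log 2) * √(∫ t in Ioc 0 r, l t ^ 2 * t) * ((2 : ℝ) ^ (-(ν / 2))) ^ k := calc
  _ ≤ √(∫ t in Ioc 0 (r / 2 ^ k), l t ^ 2 * t) * √(Real.log 2) :=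
      setIntegral_Ioc_div_two_pow_le hr k hl hl0
        (hint.mono_set (Ioc_subset_Ioc_right (div_le_self hr.le (one_le_pow₀ one_le_two))))
  _ ≤ √(C * (r / 2 ^ k / r) ^ ν * ∫ t in Ioc 0 r, l t ^ 2 * t) * √(Real.log 2) := by
      gcongr
  _ = _ := by
      rw [div_two_pow_div_self_rpow hr.ne', Real.sqrt_mul (by positivity), Real.sqrt_mul hC,
        Real.sqrt_sq (by positivity)]
      ring

end DyadicPieces

theorem stmt_7_general (a : ℝ) (l : ℝ → ℝ) (hlmeas : Measurable l)
    (hnn : ∀ t, 0 ≤ l t)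
    (hint : IntegrableOn (fun t => (l t) ^ 2 * t) (Set.Ioc 0 a))
    (C ν : ℝ) (hC : 0 < C) (hν : 0 < ν)
    (hdecay : ∀ r₁ r₂ : ℝ, 0 < r₁ → r₁ ≤ r₂ → r₂ ≤ a →
      (∫ t in Set.Ioc (0:ℝ) r₁, (l t) ^ 2 * t) ≤
        C * (r₁ / r₂) ^ ν * ∫ t in Set.Ioc (0:ℝ) r₂, (l t) ^ 2 * t) :
    ∀ r ∈ Set.Icc (0:ℝ) a,
      (∫ t in Set.Ioc (0:ℝ) r, l t) ≤
        Real.sqrt C * (1 - (2:ℝ) ^ (-(ν/2)))⁻¹ * Real.sqrt (Real.log 2) *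
          Real.sqrt (∫ t in Set.Ioc (0:ℝ) r, (l t) ^ 2 * t) := by
  rintro r ⟨hr0, hra⟩
  obtain rfl | hr := hr0.eq_or_lt
  · simp
  have hint_r := hint.mono_set (Ioc_subset_Ioc_right hra)
  set ρ : ℝ := (2 : ℝ) ^ (-(ν / 2))
  set I := ∫ t in Ioc 0 r, l t ^ 2 * t
  have hρ0 : 0 ≤ ρ := by positivity
  have hρ1 : ρ < 1 := Real.rpow_lt_one_of_one_lt_of_neg one_lt_two (by linarith)
  have hpiece (k : ℕ) :
      ∫ t in Ioc (r / 2 ^ (k + 1)) (r / 2 ^ k), l t ≤ √C * √(Real.log 2) * √I * ρ ^ k :=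
    setIntegral_Ioc_div_two_pow_le_of_decay hr k hlmeas hnn hint_r hC.le
      (hdecay _ _ (by positivity) (div_le_self hr.le (one_le_pow₀ one_le_two)) hra)
  calc ∫ t in Ioc 0 r, l t = ∫ t in ⋃ k : ℕ, Ioc (r / 2 ^ (k + 1)) (r / 2 ^ k), l t := by
        rw [iUnion_Ioc_div_two_pow hr]
    _ ≤ ∑' k : ℕ, √C * √(Real.log 2) * √I * ρ ^ k :=
        setIntegral_iUnion_le_tsum (fun _ => measurableSet_Ioc)
          (pairwise_disjoint_Ioc_div_two_pow hr.le) (ae_of_all _ hnn)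
          (fun k => integrableOn_Ioc_div_two_pow hr k hlmeas hint_r)
          ((summable_geometric_of_lt_one hρ0 hρ1).mul_left _) hpiece
    _ = _ := by
        rw [tsum_mul_left, tsum_geometric_of_lt_one hρ0 hρ1]
        ring

/-- dyadic decay lemma: if `λ ≥ 0` is measurable on `[0,a]`,
`∫₀^r λ² t dt` is finite, and for all `0 < r₁ ≤ r₂ ≤ a`,
`∫₀^{r₁} λ² t dt ≤ C (r₁/r₂)^ν ∫₀^{r₂} λ² t dt`, then for all `r ∈ [0,a]`,
`∫₀^r λ dt ≤ C^{1/2} (1 - 2^{-ν/2})⁻¹ (log 2)^{1/2} (∫₀^r λ² t dt)^{1/2}`. -/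
theorem stmt_7 (a : ℝ) (ha : 0 < a) (l : ℝ → ℝ) (hlmeas : Measurable l)
    (hnn : ∀ t, 0 ≤ l t)
    (hint : IntegrableOn (fun t => (l t) ^ 2 * t) (Set.Ioc 0 a))
    (C ν : ℝ) (hC : 0 < C) (hν : 0 < ν)
    (hdecay : ∀ r₁ r₂ : ℝ, 0 < r₁ → r₁ ≤ r₂ → r₂ ≤ a →
      (∫ t in Set.Ioc (0:ℝ) r₁, (l t) ^ 2 * t) ≤
        C * (r₁ / r₂) ^ ν * ∫ t in Set.Ioc (0:ℝ) r₂, (l t) ^ 2 * t) :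
    ∀ r ∈ Set.Icc (0:ℝ) a,
      (∫ t in Set.Ioc (0:ℝ) r, l t) ≤
        Real.sqrt C * (1 - (2:ℝ) ^ (-(ν/2)))⁻¹ * Real.sqrt (Real.log 2) *
          Real.sqrt (∫ t in Set.Ioc (0:ℝ) r, (l t) ^ 2 * t) :=
  stmt_7_general a l hlmeas hnn hint C ν hC hν hdecay
end

section
/- Let J : B → GL(ℝ²ⁿ) be a C¹ field of complex structures on an open set B ⊆ ℝ²ⁿ and h : Ω → B a C² map on an open set Ω ⊆ ℂ satisfying ∂h/∂y = J(h) ∂h/∂x (i.e., h is J-holomorphic). Then the lifted map H(z) = (h(z), ∂h/∂x(z)) ∈ B × ℝ²ⁿ is J⁽¹⁾-holomorphic: ∂H/∂y = J⁽¹⁾(H) ∂H/∂x, where J⁽¹⁾(q,v)(w₁,w₂) = (J(q)w₁, (d_v J)(q)w₁ + J(q)w₂). -/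
/-!
Differentiating the Cauchy–Riemann equation `∂_y h = J(h) ∂_x h` in `x` gives
`∂_x ∂_y h = (d_{∂_x h} J)(h) ∂_x h + J(h) ∂_x ∂_x h`. Since `h` is `C²`, the left side equals
`∂_y ∂_x h`, the second component of `∂_y H`; the first component is the equation itself.
-/

open Filter Topology

section

variable {𝕜 : Type*} [NontriviallyNormedField 𝕜]
  {E : Type*} [NormedAddCommGroup E] [NormedSpace 𝕜 E]
  {F : Type*} [NormedAddCommGroup F] [NormedSpace 𝕜 F]

theorem fderiv_fderiv_apply {f : E → F} {z : E} (hf : DifferentiableAt 𝕜 (fderiv 𝕜 f) z)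
    (u v : E) : fderiv 𝕜 (fun w => fderiv 𝕜 f w v) z u = fderiv 𝕜 (fderiv 𝕜 f) z u v := by
  simp [fderiv_clm_apply hf (differentiableAt_const v)]

theorem fderiv_fderiv_apply_of_eventuallyEq {h : E → F} {J : F → F →L[𝕜] F}
    {z : E} {u v : E} (hh : DifferentiableAt 𝕜 h z)
    (hh' : DifferentiableAt 𝕜 (fderiv 𝕜 h) z) (hJ : DifferentiableAt 𝕜 J (h z))
    (hCR : (fun w => fderiv 𝕜 h w u) =ᶠ[𝓝 z] fun w => J (h w) (fderiv 𝕜 h w v)) :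
    fderiv 𝕜 (fun w => fderiv 𝕜 h w u) z v =
      fderiv 𝕜 J (h z) (fderiv 𝕜 h z v) (fderiv 𝕜 h z v)
        + J (h z) (fderiv 𝕜 (fun w => fderiv 𝕜 h w v) z v) := by
  rw [hCR.fderiv_eq, fderiv_clm_apply (c := fun w => J (h w)) (hJ.comp z hh)
    (hh'.clm_apply (differentiableAt_const v)), fderiv_fun_comp z hJ hh]
  simp only [add_apply, ContinuousLinearMap.comp_apply, ContinuousLinearMap.flip_apply]
  abel

end

section

variable {𝕜 : Type*} [RCLike 𝕜]
  {E : Type*} [NormedAddCommGroup E] [NormedSpace 𝕜 E]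
  {F : Type*} [NormedAddCommGroup F] [NormedSpace 𝕜 F]

theorem ContDiffAt.fderiv_fderiv_apply_comm {f : E → F} {z : E} (hf : ContDiffAt 𝕜 2 f z)
    (u v : E) :
    fderiv 𝕜 (fun w => fderiv 𝕜 f w v) z u = fderiv 𝕜 (fun w => fderiv 𝕜 f w u) z v := by
  have hf' : DifferentiableAt 𝕜 (fderiv 𝕜 f) z :=
    (hf.fderiv_right le_rfl).differentiableAt one_ne_zero
  rw [fderiv_fderiv_apply hf', fderiv_fderiv_apply hf']
  exact hf.isSymmSndFDerivAt (by simp) u v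

end

/-- if `h : Ω → B ⊆ ℝ²ⁿ` is `C²` and `J`-holomorphic
(`∂h/∂y = J(h) ∂h/∂x`, where `∂h/∂x = dh(1)` and `∂h/∂y = dh(i)`), then the
lift `H(z) = (h(z), ∂h/∂x(z))` is `J⁽¹⁾`-holomorphic:
`∂H/∂y = (J(h) (∂H/∂x)₁, (d_{∂h/∂x} J)(h) (∂H/∂x)₁ + J(h) (∂H/∂x)₂)`. -/
theorem stmt_13 (n : ℕ) (B : Set (Fin (2*n) → ℝ)) (hB : IsOpen B)
    (J : (Fin (2*n) → ℝ) → ((Fin (2*n) → ℝ) →L[ℝ] (Fin (2*n) → ℝ)))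
    (hJ : ContDiffOn ℝ 1 J B)
    (Ω : Set ℂ) (hΩ : IsOpen Ω)
    (h : ℂ → (Fin (2*n) → ℝ)) (hmaps : Set.MapsTo h Ω B)
    (hh : ContDiffOn ℝ 2 h Ω)
    (hCR : ∀ z ∈ Ω, fderiv ℝ h z Complex.I = J (h z) (fderiv ℝ h z 1)) :
    ∀ z ∈ Ω,
      fderiv ℝ (fun w => (h w, fderiv ℝ h w 1)) z Complex.I =
        (J (h z) ((fderiv ℝ (fun w => (h w, fderiv ℝ h w 1)) z 1).1),
          (fderiv ℝ J (h z) (fderiv ℝ h z 1))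
              ((fderiv ℝ (fun w => (h w, fderiv ℝ h w 1)) z 1).1)
            + J (h z) ((fderiv ℝ (fun w => (h w, fderiv ℝ h w 1)) z 1).2)) := by
  intro z hz
  have hh₂ : ContDiffAt ℝ 2 h z := hh.contDiffAt (hΩ.mem_nhds hz)
  have hdh : DifferentiableAt ℝ h z := hh₂.differentiableAt two_ne_zero
  have hdh' : DifferentiableAt ℝ (fderiv ℝ h) z :=
    (hh₂.fderiv_right le_rfl).differentiableAt one_ne_zero
  have hdJ : DifferentiableAt ℝ J (h z) :=
    (hJ.contDiffAt (hB.mem_nhds (hmaps hz))).differentiableAt one_ne_zero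
  rw [hdh.fderiv_prodMk (hdh'.clm_apply (differentiableAt_const 1))]
  refine Prod.ext (hCR z hz) ?_
  simp only [ContinuousLinearMap.prod_apply]
  rw [hh₂.fderiv_fderiv_apply_comm]
  exact fderiv_fderiv_apply_of_eventuallyEq hdh hdh' hdJ
    (eventuallyEq_of_mem (hΩ.mem_nhds hz) hCR)
end

section
/- Let U ⊆ ℝ²ⁿ be open, J an almost complex structure on U, α₀ a 1-form on U with dα₀(w, Jw) ≥ C₀‖w‖² for all tangent vectors w and some C₀ > 0, and β = Σⱼ xⱼ dyⱼ the standard primitive of the symplectic form on ℂⁿ. Suppose J⁽¹⁾ is an almost complex structure on U × B₃ (B₃ ⊆ ℂⁿ open) of the form J⁽¹⁾(w₁, w₂) = (J w₁, φ w₁ + J₀ w₂), where ‖φ(q,v)‖ ≤ C₁ for all (q,v) ∈ U × B₃. Then with λ = C₀ C₁^{-2}, the 1-form α = P₁*α₀ + λ P₂*β satisfies dα((w₁,w₂), J⁽¹⁾(w₁,w₂)) ≥ (C₀/2)‖w₁‖² + (λ/2)‖w₂‖², so dα tames J⁽¹⁾. -/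
/- On `ℂⁿ`, `dβ(v, w) = Im ⟪v, w⟫`. The cross term `λ dβ(w₂, φ w₁)` is at least `-λ C₁ ‖w₁‖ ‖w₂‖`, and AM-GM with weights chosen so that
`λ C₁² = C₀` absorbs it into half of `C₀ ‖w₁‖²` (from `ω(w₁, J w₁)`) and half of `λ ‖w₂‖²`
(from `dβ(w₂, J₀ w₂) = ‖w₂‖²`). -/

open Complex

theorem EuclideanSpace.sum_re_mul_im_sub_im_mul_re {ι : Type*} [Fintype ι]
    (v w : EuclideanSpace ℂ ι) :
    ∑ j, ((v j).re * (w j).im - (v j).im * (w j).re) = (inner ℂ v w).im := by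
  rw [PiLp.inner_apply, im_sum]
  refine Finset.sum_congr rfl fun j _ => ?_
  simp only [RCLike.inner_apply, mul_im, conj_re, conj_im]
  ring

section

variable {E : Type*} [NormedAddCommGroup E] [InnerProductSpace ℂ E]

theorem neg_norm_mul_norm_le_im_inner (v w : E) : -(‖v‖ * ‖w‖) ≤ (inner ℂ v w).im :=
  neg_le_of_abs_le <| (abs_im_le_norm _).trans (norm_inner_le_norm v w)

theorem im_inner_add_I_smul_self (v w : E) :
    (inner ℂ v (w + I • v)).im = (inner ℂ v w).im + ‖v‖ ^ 2 := by
  rw [inner_add_right, inner_smul_right, inner_self_eq_norm_sq_to_K]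
  simp only [add_im, mul_im, I_re, I_im, zero_mul, one_mul, zero_add]
  norm_cast

end

theorem mul_mul_mul_le_half_sq_add_half_sq {l : ℝ} (hl : 0 ≤ l) (c x y : ℝ) :
    l * (c * x * y) ≤ l * c ^ 2 / 2 * x ^ 2 + l / 2 * y ^ 2 := by
  nlinarith [mul_nonneg hl (sq_nonneg (c * x - y))]

theorem stmt_14_general (n : ℕ) (C₀ C₁ : ℝ) (hC₀ : 0 < C₀) (hC₁ : 0 < C₁)
    (J : EuclideanSpace ℝ (Fin (2*n)) →L[ℝ] EuclideanSpace ℝ (Fin (2*n)))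
    (ω : EuclideanSpace ℝ (Fin (2*n)) →ₗ[ℝ] EuclideanSpace ℝ (Fin (2*n)) →ₗ[ℝ] ℝ)
    (hω : ∀ w, C₀ * ‖w‖ ^ 2 ≤ ω w (J w))
    (φ : EuclideanSpace ℝ (Fin (2*n)) →L[ℝ] EuclideanSpace ℂ (Fin n))
    (hφ : ‖φ‖ ≤ C₁) :
    ∀ (w₁ : EuclideanSpace ℝ (Fin (2*n))) (w₂ : EuclideanSpace ℂ (Fin n)),
      (C₀ / 2) * ‖w₁‖ ^ 2 + ((C₀ / C₁ ^ 2) / 2) * ‖w₂‖ ^ 2 ≤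
        ω w₁ (J w₁) + (C₀ / C₁ ^ 2) *
          ∑ j, ((w₂ j).re * ((φ w₁ + Complex.I • w₂) j).im
            - (w₂ j).im * ((φ w₁ + Complex.I • w₂) j).re) := by
  intro w₁ w₂
  set l := C₀ / C₁ ^ 2
  have hl : 0 ≤ l := by positivity
  have hlC₁ : l * C₁ ^ 2 = C₀ := div_mul_cancel₀ C₀ (by positivity)
  rw [EuclideanSpace.sum_re_mul_im_sub_im_mul_re, im_inner_add_I_smul_self]
  have hφw : ‖φ w₁‖ ≤ C₁ * ‖w₁‖ := φ.le_of_opNorm_le hφ w₁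
  have hcross : -(C₁ * ‖w₁‖ * ‖w₂‖) ≤ (inner ℂ w₂ (φ w₁)).im := by
    linarith [neg_norm_mul_norm_le_im_inner w₂ (φ w₁),
      mul_le_mul_of_nonneg_left hφw (norm_nonneg w₂)]
  have hamgm := mul_mul_mul_le_half_sq_add_half_sq hl C₁ ‖w₁‖ ‖w₂‖
  rw [hlC₁] at hamgm
  linarith [hω w₁, mul_le_mul_of_nonneg_left hcross hl]

/-- taming of the lifted structure. With `ω = dα₀` satisfying
`ω(w, Jw) ≥ C₀‖w‖²`, `‖φ‖ ≤ C₁`, `λ = C₀ C₁⁻²`, and `dβ` the standard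
symplectic form on `ℂⁿ` (so `dβ(w, w') = Σⱼ (Re wⱼ Im w'ⱼ - Im wⱼ Re w'ⱼ)`),
the form `dα = P₁*ω + λ P₂*dβ` evaluated on `((w₁,w₂), J⁽¹⁾(w₁,w₂))` with
`J⁽¹⁾(w₁,w₂) = (J w₁, φ w₁ + J₀ w₂)` is at least
`(C₀/2)‖w₁‖² + (λ/2)‖w₂‖²`; in particular `dα` tames `J⁽¹⁾`. -/
theorem stmt_14 (n : ℕ) (C₀ C₁ : ℝ) (hC₀ : 0 < C₀) (hC₁ : 0 < C₁)
    (J : EuclideanSpace ℝ (Fin (2*n)) →L[ℝ] EuclideanSpace ℝ (Fin (2*n)))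
    (hJ2 : ∀ w, J (J w) = -w)
    (ω : EuclideanSpace ℝ (Fin (2*n)) →ₗ[ℝ] EuclideanSpace ℝ (Fin (2*n)) →ₗ[ℝ] ℝ)
    (hω : ∀ w, C₀ * ‖w‖ ^ 2 ≤ ω w (J w))
    (φ : EuclideanSpace ℝ (Fin (2*n)) →L[ℝ] EuclideanSpace ℂ (Fin n))
    (hφ : ‖φ‖ ≤ C₁) :
    ∀ (w₁ : EuclideanSpace ℝ (Fin (2*n))) (w₂ : EuclideanSpace ℂ (Fin n)),
      (C₀ / 2) * ‖w₁‖ ^ 2 + ((C₀ / C₁ ^ 2) / 2) * ‖w₂‖ ^ 2 ≤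
        ω w₁ (J w₁) + (C₀ / C₁ ^ 2) *
          ∑ j, ((w₂ j).re * ((φ w₁ + Complex.I • w₂) j).im
            - (w₂ j).im * ((φ w₁ + Complex.I • w₂) j).re) :=
  stmt_14_general n C₀ C₁ hC₀ hC₁ J ω hω φ hφ
end

section
/- Suppose a family of smooth curves with lengths L(r) and enclosed areas A(r) (0 < r < 1) on a surface satisfies the two isoperimetric inequalities L(r)² ≥ 2πC₃ A(r)² and L(r)² ≥ 4π(A(r) − C₄A(r)²) together with the monotonicity inequality A'(r) ≥ (2πr)^{-1}L(r)², where A is positive, increasing, and C¹ on (0,1), and C₃, C₄ > 0. Then with r₀ = (1/2)e^{-2C₄/C₃}, one has A(r) ≤ 4 C₄^{-1} e^{4C₄/C₃} r² for all r ∈ (0, r₀], and consequently lim sup_{r→0} (πr²)^{-1} A(r) ≤ 4π^{-1}C₄^{-1}e^{4C₄/C₃}. -/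
open Set Filter Topology Real

/-!
The isoperimetric inequalities turn the monotonicity inequality into `A' ≥ C₃ A² / r` and
`A' ≥ 2 (A - C₄ A²) / r`. The first makes `C₃ log r + 1 / A` nonincreasing; since
`log ((1/2) / r₀) = 2 C₄ / C₃`, comparing `r₀` with `1/2` gives `1 / A(r₀) ≥ 2 C₄`. As `A` is
increasing, `C₄ A ≤ 1/2` on `(0, r₀]`, and there the second inequality makes
`A / ((1 - C₄ A) r²)` nondecreasing, whence
`A(r) ≤ A(r₀) / (1 - C₄ A(r₀)) · (r / r₀)² ≤ C₄⁻¹ (r / r₀)²`.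
-/

lemma mul_sq_div_le_of_isoperimetric {x C a a' l : ℝ} (hx : 0 < x)
    (hiso : 2 * π * C * a ^ 2 ≤ l ^ 2) (hmon : (2 * π * x)⁻¹ * l ^ 2 ≤ a') :
    C * a ^ 2 / x ≤ a' :=
  calc C * a ^ 2 / x = (2 * π * x)⁻¹ * (2 * π * C * a ^ 2) := by field_simp
    _ ≤ (2 * π * x)⁻¹ * l ^ 2 := by gcongr
    _ ≤ a' := hmon

lemma two_div_mul_le_of_isoperimetric {x C a a' l : ℝ} (hx : 0 < x)
    (hiso : 4 * π * (a - C * a ^ 2) ≤ l ^ 2) (hmon : (2 * π * x)⁻¹ * l ^ 2 ≤ a') :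
    2 / x * (a - C * a ^ 2) ≤ a' :=
  calc 2 / x * (a - C * a ^ 2) = (2 * π * x)⁻¹ * (4 * π * (a - C * a ^ 2)) := by
        field_simp; ring
    _ ≤ (2 * π * x)⁻¹ * l ^ 2 := by gcongr
    _ ≤ a' := hmon

lemma antitoneOn_mul_log_add_inv {f f' : ℝ → ℝ} {c : ℝ} {s : Set ℝ} (hs : Convex ℝ s)
    (hs0 : ∀ x ∈ s, x ≠ 0) (hf0 : ∀ x ∈ s, f x ≠ 0) (hf : ∀ x ∈ s, HasDerivAt f (f' x) x)
    (hf' : ∀ x ∈ s, c * f x ^ 2 / x ≤ f' x) :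
    AntitoneOn (fun x => c * log x + (f x)⁻¹) s := by
  have hd : ∀ x ∈ s, HasDerivAt (fun x => c * log x + (f x)⁻¹)
      (c * x⁻¹ + -f' x / f x ^ 2) x := fun x hx =>
    ((hasDerivAt_log (hs0 x hx)).const_mul c).add ((hf x hx).inv (hf0 x hx))
  refine antitoneOn_of_hasDerivWithinAt_nonpos hs
    (fun x hx => (hd x hx).continuousAt.continuousWithinAt)
    (fun x hx => (hd x (interior_subset hx)).hasDerivWithinAt) fun x hx => ?_
  replace hx := interior_subset hx
  have hcx : c * x⁻¹ ≤ f' x / f x ^ 2 := by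
    rw [le_div_iff₀ (by have := hf0 x hx; positivity), mul_right_comm, ← div_eq_mul_inv]
    exact hf' x hx
  rw [neg_div]
  linarith

lemma mul_log_div_le_inv_sub_inv {f f' : ℝ → ℝ} {c a b : ℝ} (ha : 0 < a) (hab : a ≤ b)
    (hf0 : ∀ x ∈ Icc a b, f x ≠ 0) (hf : ∀ x ∈ Icc a b, HasDerivAt f (f' x) x)
    (hf' : ∀ x ∈ Icc a b, c * f x ^ 2 / x ≤ f' x) :
    c * log (b / a) ≤ (f a)⁻¹ - (f b)⁻¹ := by
  have hanti := antitoneOn_mul_log_add_inv (convex_Icc a b)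
    (fun x hx => (ha.trans_le hx.1).ne') hf0 hf hf'
    (left_mem_Icc.2 hab) (right_mem_Icc.2 hab) hab
  rw [log_div (ha.trans_le hab).ne' ha.ne']
  linarith

lemma mul_log_div_mul_le_one {f f' : ℝ → ℝ} {c a b : ℝ} (ha : 0 < a) (hab : a ≤ b)
    (hf0 : ∀ x ∈ Icc a b, 0 < f x) (hf : ∀ x ∈ Icc a b, HasDerivAt f (f' x) x)
    (hf' : ∀ x ∈ Icc a b, c * f x ^ 2 / x ≤ f' x) :
    c * log (b / a) * f a ≤ 1 := by
  have hfa := hf0 a (left_mem_Icc.2 hab)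
  have hfb := hf0 b (right_mem_Icc.2 hab)
  have h := mul_log_div_le_inv_sub_inv ha hab (fun x hx => (hf0 x hx).ne') hf hf'
  calc c * log (b / a) * f a ≤ (f a)⁻¹ * f a := by
        gcongr
        linarith [inv_pos.2 hfb]
    _ = 1 := inv_mul_cancel₀ hfa.ne'

lemma monotoneOn_div_one_sub_mul_mul_sq {f f' : ℝ → ℝ} {C : ℝ} {s : Set ℝ} (hs : Convex ℝ s)
    (hs0 : ∀ x ∈ s, x ≠ 0) (hC : ∀ x ∈ s, C * f x ≠ 1) (hf : ∀ x ∈ s, HasDerivAt f (f' x) x)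
    (hf' : ∀ x ∈ s, 2 / x * (f x - C * f x ^ 2) ≤ f' x) :
    MonotoneOn (fun x => f x / ((1 - C * f x) * x ^ 2)) s := by
  have hd : ∀ x ∈ s, HasDerivAt (fun x => f x / ((1 - C * f x) * x ^ 2))
      ((x ^ 2 * f' x - 2 * x * (f x - C * f x ^ 2)) / ((1 - C * f x) * x ^ 2) ^ 2) x := by
    intro x hx
    have hden : HasDerivAt (fun y => (1 - C * f y) * y ^ 2)
        (-(C * f' x) * x ^ 2 + (1 - C * f x) * (2 * x)) x := by
      refine (((hf x hx).const_mul C).const_sub 1).fun_mul (hasDerivAt_pow 2 x) |>.congr_deriv ?_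
      norm_num
    refine (hf x hx).fun_div hden (mul_ne_zero (sub_ne_zero.2 (hC x hx).symm)
      (pow_ne_zero 2 (hs0 x hx))) |>.congr_deriv ?_
    ring
  refine monotoneOn_of_hasDerivWithinAt_nonneg hs
    (fun x hx => (hd x hx).continuousAt.continuousWithinAt)
    (fun x hx => (hd x (interior_subset hx)).hasDerivWithinAt) fun x hx => ?_
  replace hx := interior_subset hx
  refine div_nonneg ?_ (sq_nonneg _)
  have := mul_le_mul_of_nonneg_left (hf' x hx) (sq_nonneg x)
  rw [show x ^ 2 * (2 / x * (f x - C * f x ^ 2)) = 2 * x * (f x - C * f x ^ 2) by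
    field_simp [hs0 x hx]] at this
  linarith

lemma le_inv_mul_div_sq_of_logistic {f f' : ℝ → ℝ} {C r r₀ : ℝ} (hC : 0 < C) (hr : 0 < r)
    (hrr₀ : r ≤ r₀) (hmono : MonotoneOn f (Icc r r₀)) (hf0 : 0 ≤ f r)
    (hhalf : C * f r₀ ≤ 1 / 2) (hf : ∀ x ∈ Icc r r₀, HasDerivAt f (f' x) x)
    (hf' : ∀ x ∈ Icc r r₀, 2 / x * (f x - C * f x ^ 2) ≤ f' x) :
    f r ≤ C⁻¹ * (r / r₀) ^ 2 := by
  have hCf : ∀ x ∈ Icc r r₀, C * f x ≤ 1 / 2 := fun x hx =>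
    (mul_le_mul_of_nonneg_left (hmono hx (right_mem_Icc.2 hrr₀) hx.2) hC.le).trans hhalf
  have hφ := monotoneOn_div_one_sub_mul_mul_sq (convex_Icc r r₀)
    (fun x hx => (hr.trans_le hx.1).ne') (fun x hx => by linarith [hCf x hx]) hf hf'
    (left_mem_Icc.2 hrr₀) (right_mem_Icc.2 hrr₀) hrr₀
  have hr₀ : 0 < r₀ := hr.trans_le hrr₀
  have hCfr := hCf r (left_mem_Icc.2 hrr₀)
  have hCfr₀ := hCf r₀ (right_mem_Icc.2 hrr₀)
  have hlast : f r₀ / (1 - C * f r₀) ≤ C⁻¹ := by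
    rw [div_le_iff₀ (by linarith), inv_mul_eq_div, le_div_iff₀ hC]
    linarith
  calc f r ≤ f r / (1 - C * f r) :=
        le_div_self hf0 (by linarith) (by nlinarith [mul_nonneg hC.le hf0])
    _ = f r / ((1 - C * f r) * r ^ 2) * r ^ 2 := by field_simp
    _ ≤ f r₀ / ((1 - C * f r₀) * r₀ ^ 2) * r ^ 2 := by gcongr
    _ = f r₀ / (1 - C * f r₀) * (r / r₀) ^ 2 := by field_simp
    _ ≤ C⁻¹ * (r / r₀) ^ 2 := by gcongr

lemma limsup_inv_mul_sq_mul_le {f : ℝ → ℝ} {c K r₀ : ℝ} (hc : 0 < c) (hr₀ : 0 < r₀)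
    (hf0 : ∀ r ∈ Ioc 0 r₀, 0 ≤ f r) (hf : ∀ r ∈ Ioc 0 r₀, f r ≤ K * r ^ 2) :
    limsup (fun r => (c * r ^ 2)⁻¹ * f r) (𝓝[>] 0) ≤ c⁻¹ * K := by
  have hmem : Ioc 0 r₀ ∈ 𝓝[>] (0 : ℝ) := Ioc_mem_nhdsGT hr₀
  refine limsup_le_of_le (isCoboundedUnder_le_of_eventually_le _
    (eventually_of_mem hmem fun r hr => mul_nonneg (by have := hr.1; positivity) (hf0 r hr)))
    (eventually_of_mem hmem fun r hr => ?_)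
  calc (c * r ^ 2)⁻¹ * f r ≤ (c * r ^ 2)⁻¹ * (K * r ^ 2) := by
        have := hr.1
        gcongr
        exact hf r hr
    _ = c⁻¹ * K := by field_simp [hr.1.ne']

lemma log_div_half_mul_exp_neg (t : ℝ) : log (1 / 2 / (1 / 2 * exp (-t))) = t := by
  rw [div_mul_cancel_left₀ (by norm_num), exp_neg, inv_inv, log_exp]

lemma div_half_mul_exp_neg_sq (r t : ℝ) :
    (r / (1 / 2 * exp (-t))) ^ 2 = 4 * exp (2 * t) * r ^ 2 := by
  rw [exp_neg, two_mul, exp_add]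
  field_simp
  norm_num

theorem stmt_19_general (A A' L : ℝ → ℝ) (C₃ C₄ : ℝ) (hC₃ : 0 < C₃) (hC₄ : 0 < C₄)
    (hpos : ∀ r ∈ Set.Ioo (0:ℝ) 1, 0 < A r)
    (hmono : MonotoneOn A (Set.Ioo (0:ℝ) 1))
    (hderiv : ∀ r ∈ Set.Ioo (0:ℝ) 1, HasDerivAt A (A' r) r)
    (hiso1 : ∀ r ∈ Set.Ioo (0:ℝ) 1, 2 * Real.pi * C₃ * (A r) ^ 2 ≤ (L r) ^ 2)
    (hiso2 : ∀ r ∈ Set.Ioo (0:ℝ) 1,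
      4 * Real.pi * (A r - C₄ * (A r) ^ 2) ≤ (L r) ^ 2)
    (hmonot : ∀ r ∈ Set.Ioo (0:ℝ) 1, (2 * Real.pi * r)⁻¹ * (L r) ^ 2 ≤ A' r) :
    (∀ r ∈ Set.Ioc (0:ℝ) ((1/2) * Real.exp (-(2 * C₄ / C₃))),
      A r ≤ 4 * C₄⁻¹ * Real.exp (4 * C₄ / C₃) * r ^ 2) ∧
    Filter.limsup (fun r : ℝ => (Real.pi * r ^ 2)⁻¹ * A r)
        (nhdsWithin 0 (Set.Ioi 0)) ≤
      4 * Real.pi⁻¹ * C₄⁻¹ * Real.exp (4 * C₄ / C₃) := by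
  set r₀ := 1 / 2 * exp (-(2 * C₄ / C₃))
  have hr₀pos : 0 < r₀ := by positivity
  have hr₀half : r₀ ≤ 1 / 2 :=
    mul_le_of_le_one_right (by norm_num) (exp_le_one_iff.2 (neg_nonpos.2 (by positivity)))
  have hsub : ∀ {a}, 0 < a → Icc a (1 / 2) ⊆ Ioo (0 : ℝ) 1 := fun ha x hx =>
    ⟨ha.trans_le hx.1, hx.2.trans_lt (by norm_num)⟩
  have hhalf : C₄ * A r₀ ≤ 1 / 2 := by
    have h := mul_log_div_mul_le_one hr₀pos hr₀half
      (fun x hx => hpos x (hsub hr₀pos hx)) (fun x hx => hderiv x (hsub hr₀pos hx))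
      fun x hx => mul_sq_div_le_of_isoperimetric (hsub hr₀pos hx).1
        (hiso1 x (hsub hr₀pos hx)) (hmonot x (hsub hr₀pos hx))
    rw [log_div_half_mul_exp_neg, mul_div_cancel₀ _ hC₃.ne'] at h
    linarith
  have hdecay : ∀ r ∈ Ioc 0 r₀, A r ≤ 4 * C₄⁻¹ * exp (4 * C₄ / C₃) * r ^ 2 := by
    intro r hr
    have hsub' : Icc r r₀ ⊆ Ioo (0 : ℝ) 1 := (Icc_subset_Icc_right hr₀half).trans (hsub hr.1)
    calc A r ≤ C₄⁻¹ * (r / r₀) ^ 2 :=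
          le_inv_mul_div_sq_of_logistic hC₄ hr.1 hr.2 (hmono.mono hsub')
            (hpos r (hsub' (left_mem_Icc.2 hr.2))).le hhalf (fun x hx => hderiv x (hsub' hx))
            fun x hx => two_div_mul_le_of_isoperimetric (hsub' hx).1
              (hiso2 x (hsub' hx)) (hmonot x (hsub' hx))
      _ = 4 * C₄⁻¹ * exp (4 * C₄ / C₃) * r ^ 2 := by
        rw [div_half_mul_exp_neg_sq]; ring_nf
  refine ⟨hdecay, ?_⟩
  calc _ ≤ π⁻¹ * (4 * C₄⁻¹ * exp (4 * C₄ / C₃)) :=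
        limsup_inv_mul_sq_mul_le pi_pos hr₀pos
          (fun r hr => (hpos r (hsub hr.1 ⟨le_rfl, hr.2.trans hr₀half⟩)).le) hdecay
    _ = _ := by ring

/-- quantitative decay from the two isoperimetric inequalities
`L² ≥ 2πC₃A²`, `L² ≥ 4π(A - C₄A²)` and the monotonicity `A' ≥ (2πr)⁻¹L²` for a
positive increasing `C¹` function `A` on `(0,1)`: with
`r₀ = (1/2)e^{-2C₄/C₃}`, one has `A(r) ≤ 4 C₄⁻¹ e^{4C₄/C₃} r²` on `(0, r₀]`,
and consequently `limsup_{r→0⁺} (πr²)⁻¹ A(r) ≤ 4 π⁻¹ C₄⁻¹ e^{4C₄/C₃}`. -/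
theorem stmt_19 (A A' L : ℝ → ℝ) (C₃ C₄ : ℝ) (hC₃ : 0 < C₃) (hC₄ : 0 < C₄)
    (hpos : ∀ r ∈ Set.Ioo (0:ℝ) 1, 0 < A r)
    (hmono : MonotoneOn A (Set.Ioo (0:ℝ) 1))
    (hderiv : ∀ r ∈ Set.Ioo (0:ℝ) 1, HasDerivAt A (A' r) r)
    (hA'cont : ContinuousOn A' (Set.Ioo (0:ℝ) 1))
    (hiso1 : ∀ r ∈ Set.Ioo (0:ℝ) 1, 2 * Real.pi * C₃ * (A r) ^ 2 ≤ (L r) ^ 2)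
    (hiso2 : ∀ r ∈ Set.Ioo (0:ℝ) 1,
      4 * Real.pi * (A r - C₄ * (A r) ^ 2) ≤ (L r) ^ 2)
    (hmonot : ∀ r ∈ Set.Ioo (0:ℝ) 1, (2 * Real.pi * r)⁻¹ * (L r) ^ 2 ≤ A' r) :
    (∀ r ∈ Set.Ioc (0:ℝ) ((1/2) * Real.exp (-(2 * C₄ / C₃))),
      A r ≤ 4 * C₄⁻¹ * Real.exp (4 * C₄ / C₃) * r ^ 2) ∧
    Filter.limsup (fun r : ℝ => (Real.pi * r ^ 2)⁻¹ * A r)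
        (nhdsWithin 0 (Set.Ioi 0)) ≤
      4 * Real.pi⁻¹ * C₄⁻¹ * Real.exp (4 * C₄ / C₃) :=
  stmt_19_general A A' L C₃ C₄ hC₃ hC₄ hpos hmono hderiv hiso1 hiso2 hmonot
end
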